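/- arXiv:2010.01673 — 3 statements merged into one kernel-verified Lean document; each statement's English description precedes it below -/
import Mathlib

section
/- For every n ≥ 1, the (n+5)×(n+5) symmetric matrix Mₙ is congruent over ℚ to the diagonal matrix diag(-4, -7/4, 8/7, 9/8, 10/9, …, (n+10)/(n+9)); in particular its signature is n+1. -/
/-- Entry function for the matrices Mₙ (0-indexed).  For indices `i, j < n + 5`
this reproduces the inductive family: the top-left 6×6 block is M₁ and each
extension appends a row/column vanishing except for a diagonal entry 2 and
entries -1 adjacent to the diagonal. -/
def Ment (i j : ℕ) : ℚ :=
  if i = j then (if i = 0 then -4 else if i = 1 then -2 else if i = 2 then 0 else 2)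
  else if i + 1 = j ∨ j + 1 = i then (if min i j = 1 then 1 else -1)
  else if (i = 0 ∧ j ≤ 2) ∨ (j = 0 ∧ i ≤ 2) then -1
  else 0

/-- The matrix Mₙ, of size (n+5) × (n+5). -/
def Mmat (n : ℕ) : Matrix (Fin (n + 5)) (Fin (n + 5)) ℚ :=
  fun i j => Ment i j

/-- The diagonal matrix diag(-4, -7/4, 8/7, 9/8, …, (n+10)/(n+9)). -/
def Dmat (n : ℕ) : Matrix (Fin (n + 5)) (Fin (n + 5)) ℚ :=
  Matrix.diagonal fun k =>
    if (k : ℕ) = 0 then -4 else if (k : ℕ) = 1 then -7/4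
    else ((k : ℚ) + 6) / ((k : ℚ) + 5)

/-- The signature of a real square matrix: number of positive eigenvalues minus
number of negative eigenvalues, counted with multiplicity as roots of the
characteristic polynomial. -/
noncomputable def matSig {m : ℕ} (A : Matrix (Fin m) (Fin m) ℝ) : ℤ :=
  (A.charpoly.roots.countP (fun x => 0 < x) : ℤ) -
    (A.charpoly.roots.countP (fun x => x < 0) : ℤ)

/-! Gaussian elimination factors `Mₙ = L D Lᵀ` with `L` unit lower triangular and `D = Dmat n`:
from index 2 on the pivots obey the tridiagonal recursion `d (k+1) = 2 - 1 / d k`, which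
`d k = (k+6)/(k+5)` solves, so `P = L⁻¹` is the congruence. Over `ℝ` the spectral theorem gives
a second diagonalisation `Mₙ = U Λ Uᵀ`, and Sylvester's law of inertia says that `Λ` and `D` have
the same numbers of positive and negative entries, namely `n + 3` and `2`. -/

open Matrix Finset QuadraticMap QuadraticForm

theorem Matrix.exists_eq_mul_mul_transpose_of_eq_mul_mul_transpose {ι R : Type*} [Fintype ι]
    [DecidableEq ι] [CommRing R] {A L D : Matrix ι ι R} (hL : IsUnit L.det)
    (hA : A = L * D * Lᵀ) : ∃ P : Matrix ι ι R, IsUnit P.det ∧ D = P * A * Pᵀ := by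
  refine ⟨L⁻¹, isUnit_nonsing_inv_det L hL, ?_⟩
  rw [hA, ← Matrix.mul_assoc, ← Matrix.mul_assoc, nonsing_inv_mul _ hL, Matrix.one_mul,
    Matrix.mul_assoc, ← transpose_mul, nonsing_inv_mul _ hL, transpose_one, Matrix.mul_one]

theorem Matrix.toQuadraticForm'_equivalent_weightedSumSquares {ι R : Type*} [Fintype ι]
    [DecidableEq ι] [CommRing R] {A P : Matrix ι ι R} {w : ι → R} (hP : IsUnit P.det)
    (hA : A = P * diagonal w * Pᵀ) :
    A.toQuadraticForm'.Equivalent (weightedSumSquares R w) := by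
  refine ⟨{ toLinearEquiv := Pᵀ.toLinearEquiv (Pi.basisFun R ι) (by rwa [det_transpose]),
            map_app' := fun x => ?_ }⟩
  simp only [LinearEquiv.toFun_eq_coe, toLinearEquiv_apply, toLin_eq_toLin', toLin'_apply,
    weightedSumSquares_apply, smul_eq_mul, Matrix.toQuadraticForm',
    LinearMap.BilinMap.toQuadraticMap_apply, Matrix.toLinearMap₂'_apply']
  rw [hA, ← mulVec_mulVec, ← mulVec_mulVec, dotProduct_mulVec, ← mulVec_transpose, dotProduct]
  simp only [mulVec_diagonal]
  exact Finset.sum_congr rfl fun i _ => by ring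

theorem Matrix.IsHermitian.eq_mul_diagonal_eigenvalues_mul_transpose {ι : Type*} [Fintype ι]
    [DecidableEq ι] {A : Matrix ι ι ℝ} (hA : A.IsHermitian) :
    ∃ U : Matrix ι ι ℝ, IsUnit U.det ∧ A = U * diagonal hA.eigenvalues * Uᵀ := by
  refine ⟨hA.eigenvectorUnitary, UnitaryGroup.det_isUnit _, ?_⟩
  have := hA.spectral_theorem
  rw [Unitary.conjStarAlgAut_apply, RCLike.ofReal_real_eq_id, Function.id_comp,
    star_eq_conjTranspose, conjTranspose_eq_transpose_of_trivial] at this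
  exact this

theorem matSig_eq_ncard_eigenvalues {m : ℕ} {A : Matrix (Fin m) (Fin m) ℝ}
    (hA : A.IsHermitian) :
    matSig A = {i | 0 < hA.eigenvalues i}.ncard - {i | hA.eigenvalues i < 0}.ncard := by
  rw [matSig, hA.roots_charpoly_eq_eigenvalues, Multiset.countP_map, Multiset.countP_map]
  simp only [Set.ncard_eq_toFinset_card', Set.toFinset_ofPred]
  rfl

theorem matSig_eq_of_eq_mul_diagonal_mul_transpose {m : ℕ} {A P : Matrix (Fin m) (Fin m) ℝ}
    {w : Fin m → ℝ} (hP : IsUnit P.det) (hA : A = P * diagonal w * Pᵀ) :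
    matSig A = {i | 0 < w i}.ncard - {i | w i < 0}.ncard := by
  have hH : A.IsHermitian := by
    rw [IsHermitian, conjTranspose_eq_transpose_of_trivial, hA]
    simp [Matrix.mul_assoc]
  obtain ⟨U, hU, hAU⟩ := hH.eq_mul_diagonal_eigenvalues_mul_transpose
  have eP := toQuadraticForm'_equivalent_weightedSumSquares hP hA
  have eU := toQuadraticForm'_equivalent_weightedSumSquares hU hAU
  rw [matSig_eq_ncard_eigenvalues hH, ← sigPos_of_equiv_weightedSumSquares eU,
    ← sigNeg_of_equiv_weightedSumSquares eU, sigPos_of_equiv_weightedSumSquares eP,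
    sigNeg_of_equiv_weightedSumSquares eP]

def Dent (k : ℕ) : ℚ :=
  if k = 0 then -4 else if k = 1 then -7/4 else ((k : ℚ) + 6) / ((k : ℚ) + 5)

-- The unit lower-triangular factor: the subdiagonal entry `-(Dent k)⁻¹` is
-- `Ment (k+1) k / Dent k`, except at `(2, 1)`, which absorbs the fill-in from column 0.
def Lent (i k : ℕ) : ℚ :=
  if i = k then 1
  else if i = 2 ∧ k = 0 then 1/4
  else if i = 2 ∧ k = 1 then -5/7
  else if i = k + 1 then -(Dent k)⁻¹
  else 0

theorem Dent_of_two_le {k : ℕ} (hk : 2 ≤ k) : Dent k = ((k : ℚ) + 6) / ((k : ℚ) + 5) := by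
  simp only [Dent]; split_ifs <;> first | rfl | omega

theorem Dent_neg_iff (k : ℕ) : Dent k < 0 ↔ k < 2 := by
  rcases lt_or_ge k 2 with hk | hk
  · interval_cases k <;> norm_num [Dent]
  · rw [Dent_of_two_le hk]
    simp only [hk.not_gt, iff_false, not_lt]
    positivity

theorem Dent_ne_zero (k : ℕ) : Dent k ≠ 0 := by
  rcases lt_or_ge k 2 with hk | hk
  · exact ((Dent_neg_iff k).2 hk).ne
  · rw [Dent_of_two_le hk]; positivity

theorem Dent_succ_add_inv {k : ℕ} (hk : 2 ≤ k) : Dent (k + 1) + (Dent k)⁻¹ = 2 := by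
  rw [Dent_of_two_le hk, Dent_of_two_le (by omega : 2 ≤ k + 1)]
  push_cast
  field_simp
  ring

theorem Lent_self (i : ℕ) : Lent i i = 1 := by simp [Lent]

theorem Lent_succ_self {k : ℕ} (hk : 2 ≤ k) : Lent (k + 1) k = -(Dent k)⁻¹ := by
  simp only [Lent]; split_ifs <;> first | rfl | omega

theorem Lent_of_lt {i k : ℕ} (h : i < k) : Lent i k = 0 := by
  simp only [Lent]; split_ifs <;> first | rfl | omega

theorem Lent_of_add_two_le {i k : ℕ} (h : k + 2 ≤ i) (h' : ¬(i = 2 ∧ k = 0)) :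
    Lent i k = 0 := by
  simp only [Lent]; split_ifs <;> first | rfl | omega

theorem Ment_of_add_two_le {i j : ℕ} (h : j + 2 ≤ i) (h' : ¬(i = 2 ∧ j = 0)) :
    Ment i j = 0 := by
  simp only [Ment]; split_ifs <;> first | rfl | omega

theorem Ment_self_of_three_le {i : ℕ} (h : 3 ≤ i) : Ment i i = 2 := by
  simp only [Ment]; split_ifs <;> first | rfl | omega

theorem Ment_succ_self {j : ℕ} (h : 2 ≤ j) : Ment (j + 1) j = -1 := by
  simp only [Ment]; split_ifs <;> first | rfl | omega | simp_all

theorem Ment_comm (i j : ℕ) : Ment i j = Ment j i := by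
  simp only [Ment]; split_ifs <;> first | rfl | omega

theorem sum_Lent_mul_Dent_mul_Lent {i j : ℕ} (hji : j ≤ i) :
    ∑ k ∈ range (j + 1), Lent i k * Dent k * Lent j k = Ment i j := by
  by_cases hfar : j + 2 ≤ i ∧ ¬(i = 2 ∧ j = 0)
  · rw [Ment_of_add_two_le hfar.1 hfar.2]
    refine sum_eq_zero fun k hk => ?_
    rw [mem_range] at hk
    rw [Lent_of_add_two_le (by omega) (by omega), zero_mul, zero_mul]
  rcases le_or_gt j 2 with hj | hj
  · have hi : i ≤ 3 := by omega
    interval_cases j <;> interval_cases i <;> norm_num [sum_range_succ, Lent, Dent, Ment]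
  obtain ⟨m, rfl⟩ : ∃ m, j = m + 1 := ⟨j - 1, by omega⟩
  have hm : 2 ≤ m := by omega
  have hlow : ∑ k ∈ range m, Lent i k * Dent k * Lent (m + 1) k = 0 :=
    sum_eq_zero fun k hk => by
      rw [mem_range] at hk
      rw [Lent_of_add_two_le (i := m + 1) (by omega) (by omega), mul_zero]
  rw [sum_range_succ, sum_range_succ, hlow, zero_add, Lent_self, Lent_succ_self hm]
  obtain rfl | rfl : i = m + 1 ∨ i = m + 2 := by omega
  · rw [Lent_succ_self hm, Lent_self, Ment_self_of_three_le (by omega), ← Dent_succ_add_inv hm]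
    field_simp [Dent_ne_zero m]
    ring
  · rw [Lent_of_add_two_le (by omega) (by omega), Lent_succ_self (by omega : 2 ≤ m + 1),
      Ment_succ_self (by omega)]
    field_simp [Dent_ne_zero (m + 1)]
    ring

theorem sum_range_Lent_mul_Dent_mul_Lent {N i j : ℕ} (hji : j ≤ i) (hjN : j < N) :
    ∑ k ∈ range N, Lent i k * Dent k * Lent j k = Ment i j := by
  rw [← sum_range_add_sum_Ico _ hjN, sum_Lent_mul_Dent_mul_Lent hji, add_eq_left]
  refine sum_eq_zero fun k hk => ?_
  rw [Lent_of_lt (mem_Ico.1 hk).1, mul_zero]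

def Lmat (N : ℕ) : Matrix (Fin N) (Fin N) ℚ := of fun i k => Lent i k

theorem det_Lmat (N : ℕ) : (Lmat N).det = 1 := by
  rw [det_of_isLowerTriangular (Lmat N) fun i k hik => Lent_of_lt hik]
  simp [Lmat, Lent_self]

theorem Dmat_eq_diagonal (n : ℕ) : Dmat n = diagonal fun k : Fin (n + 5) => Dent k := rfl

theorem Mmat_eq_Lmat_mul_Dmat_mul_transpose (n : ℕ) :
    Mmat n = Lmat (n + 5) * Dmat n * (Lmat (n + 5))ᵀ := by
  ext i j
  rw [Dmat_eq_diagonal, mul_apply]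
  simp only [mul_diagonal, transpose_apply, Lmat, of_apply, Mmat]
  rw [Fin.sum_univ_eq_sum_range (fun k => Lent i k * Dent k * Lent j k)]
  rcases le_total (j : ℕ) i with h | h
  · exact (sum_range_Lent_mul_Dent_mul_Lent h j.isLt).symm
  · rw [Ment_comm, ← sum_range_Lent_mul_Dent_mul_Lent h i.isLt]
    exact sum_congr rfl fun k _ => by ring

theorem ncard_setOf_Dent_neg {N : ℕ} (hN : 2 ≤ N) : {i : Fin N | Dent i < 0}.ncard = 2 := by
  simp only [Dent_neg_iff, Set.ncard_eq_toFinset_card', Set.toFinset_ofPred,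
    Fin.card_filter_val_lt]
  omega

theorem ncard_setOf_Dent_pos {N : ℕ} (hN : 2 ≤ N) : {i : Fin N | 0 < Dent i}.ncard = N - 2 := by
  have hcompl : {i : Fin N | 0 < Dent i} = {i : Fin N | Dent i < 0}ᶜ := by
    ext i
    simp [lt_iff_le_and_ne, Dent_ne_zero i, eq_comm]
  rw [hcompl, Set.ncard_compl, ncard_setOf_Dent_neg hN, Nat.card_fin]

theorem stmt2_general (n : ℕ) :
    (∃ P : Matrix (Fin (n + 5)) (Fin (n + 5)) ℚ,
      IsUnit P.det ∧ Dmat n = P * Mmat n * P.transpose) ∧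
    matSig ((Mmat n).map (fun q : ℚ => (q : ℝ))) = n + 1 := by
  have hfactor := Mmat_eq_Lmat_mul_Dmat_mul_transpose n
  have hL : IsUnit (Lmat (n + 5)).det := by rw [det_Lmat]; exact isUnit_one
  refine ⟨exists_eq_mul_mul_transpose_of_eq_mul_mul_transpose hL hfactor, ?_⟩
  let f := Rat.castHom ℝ
  have hfactorℝ : (Mmat n).map f = (Lmat (n + 5)).map f *
      diagonal (fun k : Fin (n + 5) => (Dent k : ℝ)) * ((Lmat (n + 5)).map f)ᵀ := by
    rw [hfactor, Matrix.map_mul, Matrix.map_mul, transpose_map, Dmat_eq_diagonal,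
      diagonal_map (map_zero f)]
    rfl
  have hLℝ : IsUnit ((Lmat (n + 5)).map f).det := by
    rw [← RingHom.mapMatrix_apply, ← RingHom.map_det, det_Lmat, map_one]
    exact isUnit_one
  rw [show (fun q : ℚ => (q : ℝ)) = f from rfl,
    matSig_eq_of_eq_mul_diagonal_mul_transpose hLℝ hfactorℝ]
  simp only [Rat.cast_pos, Rat.cast_lt_zero, ncard_setOf_Dent_pos (by omega : 2 ≤ n + 5),
    ncard_setOf_Dent_neg (by omega : 2 ≤ n + 5)]
  omega

/-- For every n ≥ 1, Mₙ is congruent over ℚ to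
diag(-4, -7/4, 8/7, …, (n+10)/(n+9)); in particular its signature is n + 1. -/
theorem stmt2 (n : ℕ) (hn : 1 ≤ n) :
    (∃ P : Matrix (Fin (n + 5)) (Fin (n + 5)) ℚ,
      IsUnit P.det ∧ Dmat n = P * Mmat n * P.transpose) ∧
    matSig ((Mmat n).map (fun q : ℚ => (q : ℝ))) = n + 1 :=
  stmt2_general n
end

section
/- In the braid group B₃ on three strands with generators σ₁, σ₂ satisfying σ₁σ₂σ₁ = σ₂σ₁σ₂, for every n ≥ 1 the braid word βₙ = σ₁^{-(2n+3)} σ₂ σ₁³ σ₂ is conjugate to the braid word Aₙ = (σ₁σ₂)³ σ₁ σ₂^{-(2n+5)}. -/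
/-- The braid relation σ₁σ₂σ₁ = σ₂σ₁σ₂ for the braid group B₃,
presented on two generators. -/
def braidRel : Set (FreeGroup (Fin 2)) :=
  {FreeGroup.of 0 * FreeGroup.of 1 * FreeGroup.of 0 *
    (FreeGroup.of 1 * FreeGroup.of 0 * FreeGroup.of 1)⁻¹}

/-- The braid group B₃ = ⟨σ₁, σ₂ | σ₁σ₂σ₁ = σ₂σ₁σ₂⟩. -/
abbrev B3 := PresentedGroup braidRel

/-- The standard generators σ₁ (= σ 0) and σ₂ (= σ 1). -/
def σ (i : Fin 2) : B3 := PresentedGroup.of i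

/-- βₙ = σ₁^{-(2n+3)} σ₂ σ₁³ σ₂. -/
def β (n : ℕ) : B3 :=
  (σ 0) ^ (-(2 * (n : ℤ) + 3)) * σ 1 * (σ 0) ^ (3 : ℕ) * σ 1

/-- Aₙ = (σ₁σ₂)³ σ₁ σ₂^{-(2n+5)}. -/
def A (n : ℕ) : B3 :=
  (σ 0 * σ 1) ^ (3 : ℕ) * σ 0 * (σ 1) ^ (-(2 * (n : ℤ) + 5))

/-!
With Δ = σ₁σ₂σ₁, conjugation by Δ swaps σ₁ and σ₂, so Δ² = (σ₁σ₂)³ is central and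
σ₁σ₂σ₁³σ₂σ₁ = Δσ₁Δ = Δ²σ₂. Hence, with k = 2n + 5, both braids are Δ² times a short word:
Aₙ = Δ² σ₁σ₂^{-k} and βₙ = Δ² σ₁^{1-k}σ₂σ₁⁻¹. These are conjugate: σ₁σ₂^{-k} goes to
σ₂σ₁^{-k} under conjugation by Δ, then to σ₁^{-k}σ₂ by a cyclic rotation, then to
σ₁^{1-k}σ₂σ₁⁻¹ by conjugation by σ₁.
-/

theorem Commute.conj_mul {G : Type*} [Group G] {z c : G} (hzc : Commute z c) (x : G) :
    c * (z * x) * c⁻¹ = z * (c * x * c⁻¹) := by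
  rw [← mul_assoc, ← hzc.eq]
  group

namespace BraidRelation

variable {G : Type*} [Group G] {a b : G}

theorem semiconjBy_left (h : a * b * a = b * a * b) : SemiconjBy (a * b * a) a b := by
  unfold SemiconjBy
  rw [show b * (a * b * a) = b * a * b * a by group, ← h]

theorem semiconjBy_right (h : a * b * a = b * a * b) : SemiconjBy (a * b * a) b a := by
  unfold SemiconjBy
  rw [show a * b * a * b = a * (b * a * b) by group, ← h]

theorem commute_sq_left (h : a * b * a = b * a * b) : Commute ((a * b * a) ^ 2) a := by
  rw [sq]
  exact (semiconjBy_right h).mul_left (semiconjBy_left h)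

theorem commute_sq_right (h : a * b * a = b * a * b) : Commute ((a * b * a) ^ 2) b := by
  rw [sq]
  exact (semiconjBy_left h).mul_left (semiconjBy_right h)

theorem mul_pow_three (h : a * b * a = b * a * b) : (a * b) ^ 3 = (a * b * a) ^ 2 := by
  rw [show (a * b) ^ 3 = a * b * a * (b * a * b) by simp only [pow_succ, pow_zero]; group,
    ← h, sq]

theorem mul_mul_pow_three_mul_mul (h : a * b * a = b * a * b) :
    a * b * a ^ 3 * b * a = (a * b * a) ^ 2 * b := by
  rw [show a * b * a ^ 3 * b * a = a * b * a * (a * (a * b * a)) by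
      simp only [pow_succ, pow_zero]; group,
    ← (semiconjBy_right h).eq, sq]
  simp only [mul_assoc]

theorem conj_mul_zpow (h : a * b * a = b * a * b) (k : ℤ) :
    (a * b * a) * (a * b ^ k) * (a * b * a)⁻¹ = b * a ^ k := by
  rw [← mul_assoc, (semiconjBy_left h).eq, mul_assoc b, ((semiconjBy_right h).zpow_right k).eq]
  group

theorem isConj_mul_pow_three_mul_zpow (h : a * b * a = b * a * b) (m : ℤ) :
    IsConj ((a * b) ^ 3 * a * b ^ (-(m + 2))) (a ^ (-m) * b * a ^ 3 * b) := by
  have hβ : a ^ (-m) * b * a ^ 3 * b = (a * b * a) ^ 2 * (a ^ (-(m + 1)) * b * a⁻¹) := by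
    calc a ^ (-m) * b * a ^ 3 * b = a ^ (-(m + 1)) * (a * b * a ^ 3 * b * a) * a⁻¹ := by
          simp only [pow_succ, pow_zero]; group
      _ = a ^ (-(m + 1)) * (a * b * a) ^ 2 * (b * a⁻¹) := by
          rw [mul_mul_pow_three_mul_mul h]; simp only [mul_assoc]
      _ = (a * b * a) ^ 2 * (a ^ (-(m + 1)) * b * a⁻¹) := by
          rw [← ((commute_sq_left h).zpow_right (-(m + 1))).eq]; simp only [mul_assoc]
  have hconj : a * b⁻¹ * (a * b * a) * (a * b ^ (-(m + 2))) * (a * b⁻¹ * (a * b * a))⁻¹ =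
      a ^ (-(m + 1)) * b * a⁻¹ :=
    calc _ = a * b⁻¹ * ((a * b * a) * (a * b ^ (-(m + 2))) * (a * b * a)⁻¹) * b * a⁻¹ := by
          group
      _ = a ^ (-(m + 1)) * b * a⁻¹ := by rw [conj_mul_zpow h]; group
  have hcomm : Commute ((a * b * a) ^ 2) (a * b⁻¹ * (a * b * a)) := by
    have hl := commute_sq_left h
    have hr := commute_sq_right h
    exact (hl.mul_right hr.inv_right).mul_right ((hl.mul_right hr).mul_right hl)
  rw [hβ, mul_pow_three h, mul_assoc _ a, ← hconj, ← hcomm.conj_mul]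
  exact isConj_iff.2 ⟨_, rfl⟩

end BraidRelation

theorem σ_braid : σ 0 * σ 1 * σ 0 = σ 1 * σ 0 * σ 1 := by
  simpa [σ, PresentedGroup.of] using
    PresentedGroup.mk_eq_mk_of_mul_inv_mem (rels := braidRel) rfl

theorem stmt4_general (n : ℕ) : ∃ w : B3, β n = w * A n * w⁻¹ := by
  obtain ⟨w, hw⟩ :=
    isConj_iff.1 (BraidRelation.isConj_mul_pow_three_mul_zpow σ_braid (2 * n + 3))
  refine ⟨w, ?_⟩
  rw [β, A, ← hw, show -(2 * (n : ℤ) + 5) = -(2 * n + 3 + 2) by ring]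

/-- For every n ≥ 1, βₙ is conjugate to Aₙ in B₃. -/
theorem stmt4 (n : ℕ) (hn : 1 ≤ n) : ∃ w : B3, β n = w * A n * w⁻¹ :=
  stmt4_general n
end

section
/- Let Γ be a real symmetric (2n+4)×(2n+4) matrix of the form V + Vᵀ where V is the Seifert matrix Vₙ described below. Then the signature of Γ equals 2n. -/
/-- Entry function (0-indexed) of the Seifert matrix Vₙ of size (2n+4)×(2n+4):
V[0,0] = -2, V[0,2] = -1, V[1,0] = -1, V[1,1] = -1, V[2,1] = 1, V[2,3] = -1,
and for i ≥ 3: V[i,i] = 1 and V[i,i+1] = -1 (within bounds). -/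
def Vent (i j : ℕ) : ℝ :=
  if i = 0 ∧ j = 0 then -2
  else if i = 0 ∧ j = 2 then -1
  else if i = 1 ∧ j = 0 then -1
  else if i = 1 ∧ j = 1 then -1
  else if i = 2 ∧ j = 1 then 1
  else if i = 2 ∧ j = 3 then -1
  else if 3 ≤ i ∧ j = i then 1
  else if 3 ≤ i ∧ j = i + 1 then -1
  else 0

/-- The Seifert matrix Vₙ, of size (2n+4) × (2n+4). -/
def Vmat (n : ℕ) : Matrix (Fin (2 * n + 4)) (Fin (2 * n + 4)) ℝ :=
  fun i j => Vent i j

/-! The quadratic form of `Γ = V + Vᵀ` is `2 wᵀ V w`, and on vectors `w` it reads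
`2 (w₀(-2w₀ - w₂) - w₁(w₀ + w₁) + w₂(w₁ - w₃) + ∑_{i ≥ 3} wᵢ(wᵢ - wᵢ₊₁))`.
It is negative definite on the span of `e₀, e₁` and positive definite on a
`(2n+2)`-dimensional subspace, so by the spectral theorem `Γ` has at least two negative and
at least `2n+2` positive eigenvalues. As `Γ` has size `2n+4`, these counts are exact and the
signature is `2n`. -/

open Matrix Finset

lemma exists_ne_zero_forall_dotProduct_eq_zero {E ι κ : Type*} [AddCommGroup E] [Module ℝ E]
    [FiniteDimensional ℝ E] [Fintype κ] (v : ι → κ → ℝ) (s : Finset ι) (T : E →ₗ[ℝ] κ → ℝ)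
    (hs : #s < Module.finrank ℝ E) : ∃ x ≠ 0, ∀ i ∈ s, v i ⬝ᵥ T x = 0 := by
  let M : Matrix s κ ℝ := fun i => v i
  have hker : LinearMap.ker (M.mulVecLin ∘ₗ T) ≠ ⊥ :=
    LinearMap.ker_ne_bot_of_finrank_lt (by simpa using hs)
  obtain ⟨x, hx, hx0⟩ := (Submodule.ne_bot_iff _).mp hker
  exact ⟨x, hx0, fun i hi => congrFun hx ⟨i, hi⟩⟩

namespace Matrix.IsHermitian

section Inertia

variable {ι E : Type*} [Fintype ι] [DecidableEq ι] {A : Matrix ι ι ℝ}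
  [AddCommGroup E] [Module ℝ E] [FiniteDimensional ℝ E]

lemma dotProduct_mulVec_eq_sum_eigenvalues (hA : A.IsHermitian) (y : ι → ℝ) :
    y ⬝ᵥ A *ᵥ y = ∑ i, hA.eigenvalues i * (⇑(hA.eigenvectorBasis i) ⬝ᵥ y) ^ 2 := by
  have hy : y = ∑ i, (⇑(hA.eigenvectorBasis i) ⬝ᵥ y) • ⇑(hA.eigenvectorBasis i) := by
    have := congrArg WithLp.ofLp (hA.eigenvectorBasis.sum_repr' (WithLp.toLp 2 y))
    simpa [EuclideanSpace.inner_eq_star_dotProduct, dotProduct_comm] using this.symm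
  nth_rewrite 2 [hy]
  simp only [mulVec_sum, mulVec_smul, hA.mulVec_eigenvectorBasis, dotProduct_sum,
    dotProduct_smul, smul_eq_mul]
  refine sum_congr rfl fun i _ => ?_
  rw [dotProduct_comm y]
  ring

lemma finrank_le_card_pos_eigenvalues (hA : A.IsHermitian) (T : E →ₗ[ℝ] ι → ℝ)
    (hT : ∀ x ≠ 0, 0 < T x ⬝ᵥ A *ᵥ T x) :
    Module.finrank ℝ E ≤ #{i | 0 < hA.eigenvalues i} := by
  by_contra! h
  obtain ⟨x, hx0, hx⟩ :=
    exists_ne_zero_forall_dotProduct_eq_zero (fun i => ⇑(hA.eigenvectorBasis i)) _ T h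
  refine (hT x hx0).not_ge ?_
  rw [hA.dotProduct_mulVec_eq_sum_eigenvalues]
  refine sum_nonpos fun i _ => ?_
  by_cases hi : 0 < hA.eigenvalues i
  · simp [hx i (by simpa using hi)]
  · exact mul_nonpos_of_nonpos_of_nonneg (not_lt.mp hi) (sq_nonneg _)

lemma finrank_le_card_neg_eigenvalues (hA : A.IsHermitian) (T : E →ₗ[ℝ] ι → ℝ)
    (hT : ∀ x ≠ 0, T x ⬝ᵥ A *ᵥ T x < 0) :
    Module.finrank ℝ E ≤ #{i | hA.eigenvalues i < 0} := by
  by_contra! h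
  obtain ⟨x, hx0, hx⟩ :=
    exists_ne_zero_forall_dotProduct_eq_zero (fun i => ⇑(hA.eigenvectorBasis i)) _ T h
  refine (hT x hx0).not_ge ?_
  rw [hA.dotProduct_mulVec_eq_sum_eigenvalues]
  refine sum_nonneg fun i _ => ?_
  by_cases hi : hA.eigenvalues i < 0
  · simp [hx i (by simpa using hi)]
  · exact mul_nonneg (not_lt.mp hi) (sq_nonneg _)

end Inertia

variable {m : ℕ} {A : Matrix (Fin m) (Fin m) ℝ}

lemma matSig_eq (hA : A.IsHermitian) :
    matSig A = #{i | 0 < hA.eigenvalues i} - #{i | hA.eigenvalues i < 0} := by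
  rw [matSig, hA.roots_charpoly_eq_eigenvalues, Multiset.countP_map, Multiset.countP_map]
  rfl

lemma matSig_eq_of_le {p q : ℕ} (hA : A.IsHermitian) (hpq : p + q = m)
    (hp : p ≤ #{i | 0 < hA.eigenvalues i}) (hq : q ≤ #{i | hA.eigenvalues i < 0}) :
    matSig A = p - q := by
  have hle : #{i | 0 < hA.eigenvalues i} + #{i | hA.eigenvalues i < 0} ≤ m :=
    calc _ ≤ #{i | 0 < hA.eigenvalues i} + #{i | ¬ 0 < hA.eigenvalues i} :=
          Nat.add_le_add_left (card_le_card <| monotone_filter_right _ fun _ _ h => h.not_gt) _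
      _ = m := by rw [card_filter_add_card_filter_not, card_univ, Fintype.card_fin]
  rw [hA.matSig_eq]
  omega

end Matrix.IsHermitian

lemma dotProduct_add_transpose_mulVec {ι : Type*} [Fintype ι] (A : Matrix ι ι ℝ) (x : ι → ℝ) :
    x ⬝ᵥ (A + Aᵀ) *ᵥ x = 2 * (x ⬝ᵥ A *ᵥ x) := by
  rw [add_mulVec, dotProduct_add, mulVec_transpose, dotProduct_comm x (x ᵥ* A),
    ← dotProduct_mulVec]
  ring

lemma two_mul_sum_range_mul_sub_succ (u : ℕ → ℝ) (K : ℕ) :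
    2 * ∑ j ∈ range K, u j * (u j - u (j + 1)) =
      u 0 ^ 2 - u K ^ 2 + ∑ j ∈ range K, (u j - u (j + 1)) ^ 2 := by
  induction K with
  | zero => simp
  | succ K ih => rw [sum_range_succ, sum_range_succ, mul_add, ih]; ring

lemma eq_zero_of_sum_range_sq_sub_succ_eq_zero {u : ℕ → ℝ} {K : ℕ} (h0 : u 0 = 0)
    (h : ∑ j ∈ range K, (u j - u (j + 1)) ^ 2 = 0) {j : ℕ} (hj : j ≤ K) : u j = 0 := by
  induction j with
  | zero => exact h0
  | succ j ih =>
    have hsq := (sum_eq_zero_iff_of_nonneg fun i _ => sq_nonneg (u i - u (i + 1))).mp h j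
      (mem_range.mpr hj)
    linarith [ih (by omega), pow_eq_zero_iff (n := 2) two_ne_zero |>.mp hsq]

lemma extend_val_apply_of_le {k j : ℕ} (c : Fin k → ℝ) (hj : k ≤ j) :
    Function.extend Fin.val c 0 j = 0 :=
  Function.extend_apply' _ _ _ fun ⟨i, hi⟩ => by omega

namespace Vmat

def rowDot (w : ℕ → ℝ) : ℕ → ℝ
  | 0 => -2 * w 0 - w 2
  | 1 => -w 0 - w 1
  | 2 => w 1 - w 3
  | i + 3 => w (i + 3) - w (i + 4)

-- `w N = 0` makes up for the entry `Vent (N - 1) N = -1`, which lies outside an `N × N` matrix.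
lemma sum_range_Vent_mul {N : ℕ} (w : ℕ → ℝ) (hw : w N = 0) (hN : 3 < N) {i : ℕ}
    (hi : i < N) : ∑ j ∈ range N, Vent i j * w j = rowDot w i := by
  have hsum : ∀ a b, a ≠ b → a < N → (N ≤ b → w b = 0) →
      (∀ j, j ≠ a → j ≠ b → Vent i j = 0) →
      ∑ j ∈ range N, Vent i j * w j = Vent i a * w a + Vent i b * w b := fun a b hab ha hb h0 =>
    sum_eq_add a b hab (fun j _ hj => by simp [h0 j hj.1 hj.2])
      (fun h => absurd (mem_range.mpr ha) h) (fun h => by simp [hb (by simpa using h)])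
  rcases i with _ | _ | _ | i
  · rw [hsum 0 2 (by simp) (by omega) (by omega) (fun j h0 h2 => by simp [Vent, h0, h2])]
    grind [Vent, rowDot]
  · rw [hsum 0 1 (by simp) (by omega) (by omega) (fun j h0 h1 => by simp [Vent, h0, h1])]
    grind [Vent, rowDot]
  · rw [hsum 1 3 (by simp) (by omega) (by omega) (fun j h1 h3 => by simp [Vent, h1, h3])]
    grind [Vent, rowDot]
  · rw [hsum (i + 3) (i + 4) (by simp) hi (fun h => by rw [show i + 4 = N by omega, hw])
      (fun j h1 h2 => by simp [Vent, h1, h2])]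
    grind [Vent, rowDot]

lemma dotProduct_mulVec (n : ℕ) (w : ℕ → ℝ) (hw : w (2 * n + 4) = 0) :
    (fun i : Fin (2 * n + 4) => w i) ⬝ᵥ Vmat n *ᵥ (fun i => w i) =
      w 0 * (-2 * w 0 - w 2) + w 1 * (-w 0 - w 1) + w 2 * (w 1 - w 3) +
        ∑ j ∈ range (2 * n + 1), w (j + 3) * (w (j + 3) - w (j + 4)) := by
  have hinner : ∀ i : ℕ, ∑ j : Fin (2 * n + 4), Vent i j * w j =
      ∑ j ∈ range (2 * n + 4), Vent i j * w j :=
    fun i => Fin.sum_univ_eq_sum_range (fun j => Vent i j * w j) _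
  have hrow : ∀ i ∈ range (2 * n + 4), w i * ∑ j ∈ range (2 * n + 4), Vent i j * w j =
      w i * rowDot w i := fun i hi => by
    rw [sum_range_Vent_mul w hw (by omega) (mem_range.mp hi)]
  simp only [dotProduct, mulVec, Vmat, hinner]
  rw [Fin.sum_univ_eq_sum_range (fun i => w i * ∑ j ∈ range (2 * n + 4), Vent i j * w j),
    sum_congr rfl hrow, sum_range_succ', sum_range_succ', sum_range_succ']
  simp only [rowDot]
  ring

noncomputable def negMap (n : ℕ) : (Fin 2 → ℝ) →ₗ[ℝ] Fin (2 * n + 4) → ℝ :=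
  LinearMap.funLeft ℝ ℝ Fin.val ∘ₗ Function.ExtendByZero.linearMap ℝ Fin.val

lemma dotProduct_negMap_neg (n : ℕ) {c : Fin 2 → ℝ} (hc : c ≠ 0) :
    negMap n c ⬝ᵥ (Vmat n + (Vmat n)ᵀ) *ᵥ negMap n c < 0 := by
  set w := Function.extend Fin.val c 0
  have hw : ∀ j, 2 ≤ j → w j = 0 := fun j => extend_val_apply_of_le c
  have hw0 : w 0 = c 0 := Fin.val_injective.extend_apply c 0 0
  have hw1 : w 1 = c 1 := Fin.val_injective.extend_apply c 0 1
  change (fun i : Fin (2 * n + 4) => w i) ⬝ᵥ (Vmat n + (Vmat n)ᵀ) *ᵥ (fun i => w i) < 0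
  rw [dotProduct_add_transpose_mulVec, dotProduct_mulVec n w (hw _ (by omega)),
    sum_eq_zero fun j _ => by rw [hw (j + 3) (by omega), zero_mul], hw 2 le_rfl, hw 3 (by omega),
    hw0, hw1]
  have hc' : c 0 ≠ 0 ∨ c 1 ≠ 0 := by
    by_contra! h
    exact hc (funext fun i => by fin_cases i <;> simp [h.1, h.2])
  rcases hc' with h | h
  · nlinarith [sq_nonneg (c 0 + c 1), sq_nonneg (c 1), mul_self_pos.mpr h]
  · nlinarith [sq_nonneg (c 0 + c 1), sq_nonneg (c 0), mul_self_pos.mpr h]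

/- On `(-3x, 5x, 7x, u₀, u₁, …)` with `u_{2n+1} = 0`, twice the form of `V` is
`7x² + (7x - u₀)² + ∑ (uⱼ - uⱼ₊₁)²`: the vector `(-3, 5, 7)` is chosen so that the form is
positive on it and the cross term `-7x u₀` with the tail can be absorbed. -/
def posVec (x : ℝ) (u : ℕ → ℝ) : ℕ → ℝ
  | 0 => -3 * x
  | 1 => 5 * x
  | 2 => 7 * x
  | j + 3 => u j

def posVecLin : ℝ × (ℕ → ℝ) →ₗ[ℝ] ℕ → ℝ where
  toFun p := posVec p.1 p.2
  map_add' p q := by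
    funext j
    rcases j with _ | _ | _ | j <;> simp [posVec, mul_add]
  map_smul' r p := by
    funext j
    rcases j with _ | _ | _ | j <;> simp [posVec, mul_left_comm]

noncomputable def posMap (n : ℕ) : ℝ × (Fin (2 * n + 1) → ℝ) →ₗ[ℝ] Fin (2 * n + 4) → ℝ :=
  LinearMap.funLeft ℝ ℝ Fin.val ∘ₗ posVecLin ∘ₗ
    LinearMap.prodMap LinearMap.id (Function.ExtendByZero.linearMap ℝ Fin.val)

lemma dotProduct_posMap_pos (n : ℕ) {p : ℝ × (Fin (2 * n + 1) → ℝ)} (hp : p ≠ 0) :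
    0 < posMap n p ⬝ᵥ (Vmat n + (Vmat n)ᵀ) *ᵥ posMap n p := by
  obtain ⟨x, c⟩ := p
  set u := Function.extend Fin.val c 0
  set w := posVec x u
  have hu : u (2 * n + 1) = 0 := extend_val_apply_of_le c le_rfl
  set D := ∑ j ∈ range (2 * n + 1), (u j - u (j + 1)) ^ 2
  have hQ : (fun i : Fin (2 * n + 4) => w i) ⬝ᵥ (Vmat n + (Vmat n)ᵀ) *ᵥ (fun i => w i) =
      7 * x ^ 2 + (7 * x - u 0) ^ 2 + D := by
    rw [dotProduct_add_transpose_mulVec, dotProduct_mulVec n w hu]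
    simp only [w, posVec]
    linear_combination two_mul_sum_range_mul_sub_succ u (2 * n + 1) - u (2 * n + 1) * hu
  change 0 < (fun i : Fin (2 * n + 4) => w i) ⬝ᵥ (Vmat n + (Vmat n)ᵀ) *ᵥ (fun i => w i)
  have hD : 0 ≤ D := sum_nonneg fun j _ => sq_nonneg _
  rw [hQ]
  by_contra! hle
  have hx : x = 0 := by nlinarith [sq_nonneg (7 * x - u 0)]
  have hu0 : u 0 = 0 := by nlinarith [sq_nonneg x, sq_nonneg (7 * x - u 0)]
  have hD0 : D = 0 := by nlinarith [sq_nonneg x, sq_nonneg (7 * x - u 0)]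
  refine hp (Prod.ext hx (funext fun i => ?_))
  change c i = 0
  rw [← Fin.val_injective.extend_apply c 0 i]
  exact eq_zero_of_sum_range_sq_sub_succ_eq_zero hu0 hD0 i.isLt.le

end Vmat

theorem stmt9_general (n : ℕ) :
    matSig (Vmat n + (Vmat n).transpose) = 2 * n := by
  have hA : (Vmat n + (Vmat n)ᵀ).IsHermitian :=
    isHermitian_iff_isSymm.mpr (isSymm_add_transpose_self _)
  have hpos := hA.finrank_le_card_pos_eigenvalues (Vmat.posMap n)
    fun _ => Vmat.dotProduct_posMap_pos n
  have hneg := hA.finrank_le_card_neg_eigenvalues (Vmat.negMap n)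
    fun _ => Vmat.dotProduct_negMap_neg n
  rw [Module.finrank_prod, Module.finrank_self, Module.finrank_fin_fun] at hpos
  rw [Module.finrank_fin_fun] at hneg
  rw [hA.matSig_eq_of_le (p := 2 * n + 2) (q := 2) (by ring) (by omega) hneg]
  push_cast
  ring

/-- The signature of Γ = Vₙ + Vₙᵀ equals 2n. -/
theorem stmt9 (n : ℕ) (hn : 1 ≤ n) :
    matSig (Vmat n + (Vmat n).transpose) = 2 * n :=
  stmt9_general n
end
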